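/- Let M, N be positive integers, h > 0, τ > 0, μ ≥ 0, γ ≥ 0, ν ≥ 0 and κ ∈ ℝ. Suppose the periodic grid functions u^k, v^k (0 ≤ k ≤ N) satisfy the compact scheme. Then the numerical solution is uniformly bounded: for every 1 ≤ k ≤ N, ‖u^k‖² ≤ 2·(‖u⁰‖² + μ·|u⁰|₁² + (μh²/12)·‖v⁰‖² − (μh⁴/144)·|v⁰|₁²). (Boundedness remark following Theorem 4.1, derived from the energy identities (21)–(22).) -/

import Mathlib

open Finset

namespace BBMB

/-- A periodic grid function with period `M`. -/
def Periodic (M : ℕ) (u : ℤ → ℝ) : Prop := ∀ i : ℤ, u (i + (M : ℤ)) = u i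

/-- Forward difference `δ_x u_{i+1/2} = (u_{i+1} - u_i)/h`. -/
noncomputable def dxp (h : ℝ) (u : ℤ → ℝ) (i : ℤ) : ℝ := (u (i + 1) - u i) / h

/-- Backward difference `δ_x u_{i-1/2} = (u_i - u_{i-1})/h`. -/
noncomputable def dxm (h : ℝ) (u : ℤ → ℝ) (i : ℤ) : ℝ := (u i - u (i - 1)) / h

/-- Second difference `δ_x² u_i = (u_{i+1} - 2 u_i + u_{i-1})/h²`. -/
noncomputable def dxx (h : ℝ) (u : ℤ → ℝ) (i : ℤ) : ℝ :=
  (u (i + 1) - 2 * u i + u (i - 1)) / h ^ 2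

/-- Centered difference `Δ_x u_i = (u_{i+1} - u_{i-1})/(2h)`. -/
noncomputable def Dx (h : ℝ) (u : ℤ → ℝ) (i : ℤ) : ℝ := (u (i + 1) - u (i - 1)) / (2 * h)

/-- Discrete inner product `(u, w) = h ∑_{i=1}^{M} u_i w_i`. -/
noncomputable def ip (M : ℕ) (h : ℝ) (u w : ℤ → ℝ) : ℝ :=
  h * ∑ i ∈ Finset.Icc (1 : ℤ) (M : ℤ), u i * w i

/-- Discrete inner product `⟨δ_x u, δ_x w⟩ = h ∑_{i=1}^{M} (δ_x u_{i-1/2})(δ_x w_{i-1/2})`. -/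
noncomputable def dip (M : ℕ) (h : ℝ) (u w : ℤ → ℝ) : ℝ :=
  h * ∑ i ∈ Finset.Icc (1 : ℤ) (M : ℤ), dxm h u i * dxm h w i

/-- Discrete `L²` norm `‖u‖ = √((u,u))`. -/
noncomputable def nrm (M : ℕ) (h : ℝ) (u : ℤ → ℝ) : ℝ := Real.sqrt (ip M h u u)

/-- Discrete `H¹` seminorm `|u|₁ = √(⟨δ_x u, δ_x u⟩)`. -/
noncomputable def snorm (M : ℕ) (h : ℝ) (u : ℤ → ℝ) : ℝ := Real.sqrt (dip M h u u)

/-- Trilinear term `ψ(u,v)_i = (1/3) (u_i Δ_x v_i + Δ_x (u·v)_i)`. -/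
noncomputable def psi (h : ℝ) (u v : ℤ → ℝ) (i : ℤ) : ℝ :=
  (1 / 3) * (u i * Dx h v i + Dx h (fun j => u j * v j) i)

/-- Average of two grid functions. -/
noncomputable def half (w0 w1 : ℤ → ℝ) : ℤ → ℝ := fun i => (w0 i + w1 i) / 2

/-- The three-level linearized compact difference scheme (17)–(20a). -/
def SatisfiesScheme (M N : ℕ) (h τ μ γ κ ν : ℝ) (u v : ℕ → ℤ → ℝ) : Prop :=
  (∀ k ≤ N, Periodic M (u k) ∧ Periodic M (v k)) ∧
  (∀ k ≤ N, ∀ i : ℤ, v k i = dxx h (u k) i - h ^ 2 / 12 * dxx h (v k) i) ∧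
  (∀ i : ℤ,
    (u 1 i - u 0 i) / τ - μ * (v 1 i - v 0 i) / τ
      + γ * (psi h (u 0) (half (u 0) (u 1)) i
             - h ^ 2 / 2 * psi h (v 0) (half (u 0) (u 1)) i)
      + κ * (Dx h (half (u 0) (u 1)) i - h ^ 2 / 6 * Dx h (half (v 0) (v 1)) i)
      - ν * half (v 0) (v 1) i = 0) ∧
  (∀ k : ℕ, 1 ≤ k → k + 1 ≤ N → ∀ i : ℤ,
    (u (k + 1) i - u (k - 1) i) / (2 * τ) - μ * (v (k + 1) i - v (k - 1) i) / (2 * τ)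
      + γ * (psi h (u k) (half (u (k - 1)) (u (k + 1))) i
             - h ^ 2 / 2 * psi h (v k) (half (u (k - 1)) (u (k + 1))) i)
      + κ * (Dx h (half (u (k - 1)) (u (k + 1))) i
             - h ^ 2 / 6 * Dx h (half (v (k - 1)) (v (k + 1))) i)
      - ν * half (v (k - 1)) (v (k + 1)) i = 0)

/-! The scheme dissipates the discrete energy `E(u, v) = (u, u) - μ (v, u)`. Pairing a time step
with the average `w` of the two outer levels, the time difference produces the jump of `E` (the
compact relation makes the `μ`-cross terms symmetric), the nonlinear `ψ`-terms and the dispersive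
`Δ_x`-terms vanish by summation by parts, and the damping term has a sign because the compact
operator is negative: `(v, u) = -|u|₁² - h²/12 ‖v‖² + h⁴/144 |v|₁² ≤ 0` by the inverse inequality
`|v|₁² ≤ 4/h² ‖v‖²`. Hence `‖uᵏ‖² ≤ E(uᵏ, vᵏ) ≤ E(u⁰, v⁰)`, and `E(u⁰, v⁰)` is the bracket on the
right-hand side of the claim. -/

section Periodicity

variable {M : ℕ} {h : ℝ} {u w : ℤ → ℝ}

lemma Periodic.apply_add_add (hu : Periodic M u) (i c : ℤ) : u (i + M + c) = u (i + c) := by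
  rw [add_right_comm, hu]

lemma Periodic.apply_add_sub (hu : Periodic M u) (i c : ℤ) : u (i + M - c) = u (i - c) := by
  rw [add_sub_right_comm, hu]

lemma Periodic.comp_sub (hu : Periodic M u) (c : ℤ) : Periodic M (fun i => u (i - c)) :=
  fun i => hu.apply_add_sub i c

lemma Periodic.mul (hu : Periodic M u) (hw : Periodic M w) : Periodic M (fun i => u i * w i) :=
  fun i => by simp only [hu i, hw i]

lemma Periodic.half (hu : Periodic M u) (hw : Periodic M w) : Periodic M (half u w) :=
  fun i => by simp only [BBMB.half, hu i, hw i]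

lemma Periodic.dxm (hu : Periodic M u) : Periodic M (dxm h u) :=
  fun i => by simp only [BBMB.dxm, hu i, hu.apply_add_sub]

lemma Periodic.Dx (hu : Periodic M u) : Periodic M (Dx h u) :=
  fun i => by simp only [BBMB.Dx, hu.apply_add_add, hu.apply_add_sub]

lemma Periodic.psi (hu : Periodic M u) (hw : Periodic M w) : Periodic M (psi h u w) :=
  fun i => by simp only [BBMB.psi, hu i, hw.Dx i, (hu.mul hw).Dx i]

lemma sum_Icc_sub_eq (g : ℤ → ℝ) (M : ℕ) :
    ∑ i ∈ Icc (1 : ℤ) M, (g (i + 1) - g i) = g (M + 1) - g 1 := by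
  induction M with
  | zero => simp
  | succ n ih =>
    push_cast
    rw [← insert_Icc_right_eq_Icc_add_one (by omega), sum_insert (by simp), ih]
    ring

lemma Periodic.sum_Icc_eq_zero_of_eq_sub {f g : ℤ → ℝ} (hg : Periodic M g)
    (hf : ∀ i, f i = g (i + 1) - g i) : ∑ i ∈ Icc (1 : ℤ) M, f i = 0 := by
  rw [sum_congr rfl fun i _ => hf i, sum_Icc_sub_eq, add_comm, hg, sub_self]

lemma Periodic.sum_Icc_comp_sub_one (hu : Periodic M u) :
    ∑ i ∈ Icc (1 : ℤ) M, u (i - 1) = ∑ i ∈ Icc (1 : ℤ) M, u i := by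
  rw [eq_comm, ← sub_eq_zero, ← sum_sub_distrib]
  exact (hu.comp_sub 1).sum_Icc_eq_zero_of_eq_sub fun i => by simp

end Periodicity

section InnerProduct

variable {M : ℕ} {h : ℝ}

lemma ip_comm (M : ℕ) (h : ℝ) (a b : ℤ → ℝ) : ip M h a b = ip M h b a := by
  simp only [ip, mul_comm (a _)]

lemma dip_comm (M : ℕ) (h : ℝ) (a b : ℤ → ℝ) : dip M h a b = dip M h b a := by
  simp only [dip, mul_comm (dxm h a _)]

lemma ip_self_nonneg (M : ℕ) (hh : 0 ≤ h) (a : ℤ → ℝ) : 0 ≤ ip M h a a :=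
  mul_nonneg hh (sum_nonneg fun _ _ => mul_self_nonneg _)

lemma dip_self_nonneg (M : ℕ) (hh : 0 ≤ h) (a : ℤ → ℝ) : 0 ≤ dip M h a a :=
  mul_nonneg hh (sum_nonneg fun _ _ => mul_self_nonneg _)

lemma nrm_sq (M : ℕ) (hh : 0 ≤ h) (a : ℤ → ℝ) : nrm M h a ^ 2 = ip M h a a :=
  Real.sq_sqrt (ip_self_nonneg M hh a)

lemma snorm_sq (M : ℕ) (hh : 0 ≤ h) (a : ℤ → ℝ) : snorm M h a ^ 2 = dip M h a a :=
  Real.sq_sqrt (dip_self_nonneg M hh a)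

variable {a b : ℤ → ℝ}

lemma ip_Dx_left (hh : h ≠ 0) (ha : Periodic M a) (hb : Periodic M b) :
    ip M h (Dx h a) b = -ip M h a (Dx h b) := by
  rw [eq_neg_iff_add_eq_zero, ip, ip, ← mul_add, ← sum_add_distrib, mul_eq_zero_of_right]
  refine Periodic.sum_Icc_eq_zero_of_eq_sub
    (g := fun j => (a (j - 1) * b j + a j * b (j - 1)) / (2 * h))
    (fun j => by simp only [ha j, hb j, ha.apply_add_sub, hb.apply_add_sub]) fun i => ?_
  simp only [Dx, add_sub_cancel_right]
  field_simp
  ring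

lemma ip_self_Dx (hh : h ≠ 0) (ha : Periodic M a) : ip M h a (Dx h a) = 0 := by
  have h_skew := ip_Dx_left hh ha ha
  rw [ip_comm] at h_skew
  linarith

lemma ip_dxx_left (hh : h ≠ 0) (ha : Periodic M a) (hb : Periodic M b) :
    ip M h (dxx h a) b = -dip M h a b := by
  rw [eq_neg_iff_add_eq_zero, ip, dip, ← mul_add, ← sum_add_distrib, mul_eq_zero_of_right]
  refine Periodic.sum_Icc_eq_zero_of_eq_sub (g := fun j => dxm h a j * b (j - 1) / h)
    (fun j => by simp only [ha.dxm j, hb.apply_add_sub]) fun i => ?_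
  simp only [dxx, dxm, add_sub_cancel_right]
  field_simp
  ring

lemma dip_self_Dx (hh : h ≠ 0) (ha : Periodic M a) : dip M h a (Dx h a) = 0 := by
  rw [dip, mul_eq_zero_of_right]
  refine Periodic.sum_Icc_eq_zero_of_eq_sub
    (g := fun j => dxm h a (j - 1) * dxm h a j / (2 * h))
    (fun j => by simp only [ha.dxm j, ha.dxm.apply_add_sub]) fun i => ?_
  simp only [dxm, Dx, add_sub_cancel_right, sub_add_cancel]
  field_simp
  ring

lemma ip_psi_self (hh : h ≠ 0) {c : ℤ → ℝ} (hc : Periodic M c) (ha : Periodic M a) :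
    ip M h (psi h c a) a = 0 := by
  rw [ip, mul_eq_zero_of_right]
  refine Periodic.sum_Icc_eq_zero_of_eq_sub
    (g := fun j => a (j - 1) * a j * (c (j - 1) + c j) / (6 * h))
    (fun j => by simp only [ha j, hc j, ha.apply_add_sub, hc.apply_add_sub]) fun i => ?_
  simp only [psi, Dx, add_sub_cancel_right]
  field_simp
  ring

lemma dip_self_le (hh : 0 < h) (ha : Periodic M a) : dip M h a a ≤ 4 / h ^ 2 * ip M h a a := by
  have h_shift := (ha.mul ha).sum_Icc_comp_sub_one
  calc dip M h a a = h * ∑ i ∈ Icc (1 : ℤ) M, (a i - a (i - 1)) * (a i - a (i - 1)) / h ^ 2 := by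
        simp only [dip, dxm]
        congr 1
        exact sum_congr rfl fun i _ => by ring
    _ ≤ h * ∑ i ∈ Icc (1 : ℤ) M, (2 * (a i * a i) + 2 * (a (i - 1) * a (i - 1))) / h ^ 2 := by
        gcongr with i
        nlinarith [sq_nonneg (a i + a (i - 1))]
    _ = 4 / h ^ 2 * ip M h a a := by
        simp only [ip, ← sum_div, sum_add_distrib, ← mul_sum, h_shift]
        ring

end InnerProduct

structure CompactRel (M : ℕ) (h : ℝ) (u v : ℤ → ℝ) : Prop where
  periodic_left : Periodic M u
  periodic_right : Periodic M v
  apply_eq : ∀ i, v i = dxx h u i - h ^ 2 / 12 * dxx h v i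

namespace CompactRel

variable {M : ℕ} {h : ℝ} {u v u' v' : ℤ → ℝ}

lemma Dx (hr : CompactRel M h u v) : CompactRel M h (Dx h u) (Dx h v) where
  periodic_left := hr.periodic_left.Dx
  periodic_right := hr.periodic_right.Dx
  apply_eq i := by
    have h_next := hr.apply_eq (i + 1)
    have h_prev := hr.apply_eq (i - 1)
    simp only [BBMB.Dx, dxx, add_sub_cancel_right, sub_add_cancel] at *
    linear_combination (h_next - h_prev) / (2 * h)

lemma half (hr : CompactRel M h u v) (hr' : CompactRel M h u' v') :
    CompactRel M h (half u u') (half v v') where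
  periodic_left := hr.periodic_left.half hr'.periodic_left
  periodic_right := hr.periodic_right.half hr'.periodic_right
  apply_eq i := by
    change (v i + v' i) / 2 = _
    rw [hr.apply_eq i, hr'.apply_eq i]
    simp only [dxx, BBMB.half]
    ring

lemma ip_left (hr : CompactRel M h u v) (w : ℤ → ℝ) :
    ip M h v w = ip M h (dxx h u) w - h ^ 2 / 12 * ip M h (dxx h v) w := by
  simp only [ip, mul_sum, ← sum_sub_distrib]
  exact sum_congr rfl fun i _ => by rw [hr.apply_eq i]; ring

lemma ip_eq (hh : h ≠ 0) (hr : CompactRel M h u v) (hr' : CompactRel M h u' v') :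
    ip M h v u' = -dip M h u u' - h ^ 2 / 12 * ip M h v v'
      + h ^ 4 / 144 * dip M h v v' := by
  have e := hr.ip_left u'
  have e' := hr'.ip_left v
  rw [ip_dxx_left hh hr.periodic_left hr'.periodic_left,
    ip_dxx_left hh hr.periodic_right hr'.periodic_left] at e
  rw [ip_dxx_left hh hr'.periodic_left hr.periodic_right,
    ip_dxx_left hh hr'.periodic_right hr.periodic_right, ip_comm, dip_comm M h u',
    dip_comm M h v'] at e'
  linear_combination e + h ^ 2 / 12 * e'

lemma ip_comm (hh : h ≠ 0) (hr : CompactRel M h u v) (hr' : CompactRel M h u' v') :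
    ip M h v u' = ip M h v' u := by
  rw [hr.ip_eq hh hr', hr'.ip_eq hh hr, dip_comm M h u, BBMB.ip_comm M h v, dip_comm M h v]

lemma ip_nonpos (hh : 0 < h) (hr : CompactRel M h u v) : ip M h v u ≤ 0 := by
  have h_inv : h ^ 4 / 144 * dip M h v v ≤ h ^ 2 / 36 * ip M h v v :=
    calc h ^ 4 / 144 * dip M h v v ≤ h ^ 4 / 144 * (4 / h ^ 2 * ip M h v v) := by
          gcongr
          exact dip_self_le hh hr.periodic_right
      _ = h ^ 2 / 36 * ip M h v v := by
          field_simp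
          ring
  rw [hr.ip_eq hh.ne' hr]
  nlinarith [dip_self_nonneg M hh.le u, mul_nonneg (sq_nonneg h) (ip_self_nonneg M hh.le v)]

lemma ip_Dx_right_eq_zero (hh : h ≠ 0) (hr : CompactRel M h u v) :
    ip M h (BBMB.Dx h v) u = 0 := by
  have h_pair := hr.ip_eq hh hr.Dx
  rw [dip_self_Dx hh hr.periodic_left, ip_self_Dx hh hr.periodic_right,
    dip_self_Dx hh hr.periodic_right] at h_pair
  rw [ip_Dx_left hh hr.periodic_right hr.periodic_left, h_pair]
  ring

end CompactRel

/-- Clause (iii) of the scheme reads `stepResidual h τ μ γ κ ν (u k) (v k) (u (k - 1)) (v (k - 1))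
(u (k + 1)) (v (k + 1)) = 0` and clause (ii) reads
`stepResidual h (τ / 2) μ γ κ ν (u 0) (v 0) (u 0) (v 0) (u 1) (v 1) = 0`. -/
noncomputable def stepResidual (h τ μ γ κ ν : ℝ) (c vc a va b vb : ℤ → ℝ) (i : ℤ) : ℝ :=
  (b i - a i) / (2 * τ) - μ * (vb i - va i) / (2 * τ)
    + γ * (psi h c (half a b) i - h ^ 2 / 2 * psi h vc (half a b) i)
    + κ * (Dx h (half a b) i - h ^ 2 / 6 * Dx h (half va vb) i)
    - ν * half va vb i

noncomputable def energy (M : ℕ) (h μ : ℝ) (u v : ℤ → ℝ) : ℝ :=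
  ip M h u u - μ * ip M h v u

section Energy

variable {M : ℕ} {h τ μ γ κ ν : ℝ} {u v : ℤ → ℝ}

lemma CompactRel.energy_eq (hh : 0 < h) (hr : CompactRel M h u v) :
    energy M h μ u v = nrm M h u ^ 2 + μ * snorm M h u ^ 2 + μ * h ^ 2 / 12 * nrm M h v ^ 2
      - μ * h ^ 4 / 144 * snorm M h v ^ 2 := by
  rw [energy, nrm_sq M hh.le, nrm_sq M hh.le, snorm_sq M hh.le, snorm_sq M hh.le,
    hr.ip_eq hh.ne' hr]
  ring

lemma CompactRel.sq_nrm_le_energy (hμ : 0 ≤ μ) (hh : 0 < h) (hr : CompactRel M h u v) :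
    nrm M h u ^ 2 ≤ energy M h μ u v := by
  rw [energy, nrm_sq M hh.le]
  linarith [mul_nonpos_of_nonneg_of_nonpos hμ (hr.ip_nonpos hh)]

lemma ip_stepResidual_half (hτ : τ ≠ 0) (c vc a va b vb : ℤ → ℝ) :
    4 * τ * ip M h (stepResidual h τ μ γ κ ν c vc a va b vb) (half a b) =
      ip M h b b - ip M h a a
      - μ * (ip M h vb b + ip M h vb a - ip M h va b - ip M h va a)
      + 4 * τ * γ * (ip M h (psi h c (half a b)) (half a b)
          - h ^ 2 / 2 * ip M h (psi h vc (half a b)) (half a b))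
      + 4 * τ * κ * (ip M h (Dx h (half a b)) (half a b)
          - h ^ 2 / 6 * ip M h (Dx h (half va vb)) (half a b))
      - 4 * τ * ν * ip M h (half va vb) (half a b) := by
  simp only [ip, mul_sum, ← sum_sub_distrib, ← sum_add_distrib]
  refine sum_congr rfl fun i _ => ?_
  simp only [stepResidual, half]
  field_simp
  ring

lemma energy_le_of_stepResidual_eq_zero (hh : 0 < h) (hτ : 0 < τ) (hν : 0 ≤ ν)
    {c vc a va b vb : ℤ → ℝ} (hc : Periodic M c) (hvc : Periodic M vc)
    (ha : CompactRel M h a va) (hb : CompactRel M h b vb)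
    (hres : ∀ i, stepResidual h τ μ γ κ ν c vc a va b vb i = 0) :
    energy M h μ b vb ≤ energy M h μ a va := by
  have hw := ha.half hb
  have h_id := ip_stepResidual_half (M := M) (h := h) (μ := μ) (γ := γ) (κ := κ) (ν := ν)
    hτ.ne' c vc a va b vb
  have h_zero : ip M h (stepResidual h τ μ γ κ ν c vc a va b vb) (half a b) = 0 := by
    simp only [ip, hres, zero_mul, sum_const_zero, mul_zero]
  rw [h_zero, ip_psi_self hh.ne' hc hw.periodic_left, ip_psi_self hh.ne' hvc hw.periodic_left,
    ip_comm M h (Dx h _), ip_self_Dx hh.ne' hw.periodic_left, hw.ip_Dx_right_eq_zero hh.ne',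
    hb.ip_comm hh.ne' ha] at h_id
  have h_diss := mul_nonpos_of_nonneg_of_nonpos (by positivity : 0 ≤ 4 * τ * ν) (hw.ip_nonpos hh)
  unfold energy
  linarith

end Energy

namespace SatisfiesScheme

variable {M N : ℕ} {h τ μ γ κ ν : ℝ} {u v : ℕ → ℤ → ℝ}

lemma compactRel (hs : SatisfiesScheme M N h τ μ γ κ ν u v) {k : ℕ} (hk : k ≤ N) :
    CompactRel M h (u k) (v k) :=
  ⟨(hs.1 k hk).1, (hs.1 k hk).2, hs.2.1 k hk⟩

lemma energy_le_energy_zero (hs : SatisfiesScheme M N h τ μ γ κ ν u v) (hh : 0 < h) (hτ : 0 < τ)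
    (hν : 0 ≤ ν) : ∀ k ≤ N, energy M h μ (u k) (v k) ≤ energy M h μ (u 0) (v 0) := by
  intro k
  induction k using Nat.twoStepInduction with
  | zero => exact fun _ => le_rfl
  | one =>
    intro hN
    refine energy_le_of_stepResidual_eq_zero (γ := γ) (κ := κ) hh (half_pos hτ) hν
      (hs.1 0 N.zero_le).1 (hs.1 0 N.zero_le).2 (hs.compactRel N.zero_le) (hs.compactRel hN)
      fun i => ?_
    rw [stepResidual, mul_div_cancel₀ τ two_ne_zero]
    exact hs.2.2.1 i
  | more n ih _ =>
    intro hn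
    exact (energy_le_of_stepResidual_eq_zero hh hτ hν (hs.1 (n + 1) (by omega)).1
      (hs.1 (n + 1) (by omega)).2 (hs.compactRel (by omega)) (hs.compactRel hn)
      (hs.2.2.2 (n + 1) (by omega) hn)).trans (ih (by omega))

end SatisfiesScheme

theorem solution_boundedness_general (M N : ℕ) (h τ μ γ κ ν : ℝ) (u v : ℕ → ℤ → ℝ)
    (hh : 0 < h) (hτ : 0 < τ)
    (hμ : 0 ≤ μ) (hν : 0 ≤ ν)
    (hscheme : SatisfiesScheme M N h τ μ γ κ ν u v) :
    ∀ k : ℕ, 1 ≤ k → k ≤ N →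
      (nrm M h (u k)) ^ 2 ≤
        2 * ((nrm M h (u 0)) ^ 2 + μ * (snorm M h (u 0)) ^ 2
          + μ * h ^ 2 / 12 * (nrm M h (v 0)) ^ 2
          - μ * h ^ 4 / 144 * (snorm M h (v 0)) ^ 2) := by
  intro k _ hk
  have h_init := hscheme.compactRel N.zero_le
  rw [← h_init.energy_eq hh]
  have h_init_nonneg : 0 ≤ energy M h μ (u 0) (v 0) :=
    (sq_nonneg _).trans (h_init.sq_nrm_le_energy hμ hh)
  calc nrm M h (u k) ^ 2 ≤ energy M h μ (u k) (v k) :=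
        (hscheme.compactRel hk).sq_nrm_le_energy hμ hh
    _ ≤ energy M h μ (u 0) (v 0) := hscheme.energy_le_energy_zero hh hτ hν k hk
    _ ≤ 2 * energy M h μ (u 0) (v 0) := by linarith

/-- Boundedness of the numerical solution (remark following Theorem 4.1). -/
theorem solution_boundedness (M N : ℕ) (h τ μ γ κ ν : ℝ) (u v : ℕ → ℤ → ℝ)
    (hM : 0 < M) (hN : 0 < N) (hh : 0 < h) (hτ : 0 < τ)
    (hμ : 0 ≤ μ) (hγ : 0 ≤ γ) (hν : 0 ≤ ν)
    (hscheme : SatisfiesScheme M N h τ μ γ κ ν u v) :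
    ∀ k : ℕ, 1 ≤ k → k ≤ N →
      (nrm M h (u k)) ^ 2 ≤
        2 * ((nrm M h (u 0)) ^ 2 + μ * (snorm M h (u 0)) ^ 2
          + μ * h ^ 2 / 12 * (nrm M h (v 0)) ^ 2
          - μ * h ^ 4 / 144 * (snorm M h (v 0)) ^ 2) :=
  solution_boundedness_general M N h τ μ γ κ ν u v hh hτ hμ hν hscheme

end BBMB
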